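/- arXiv:0810.1823 — 2 statements merged into one kernel-verified Lean document; each statement's English description precedes it below -/
import Mathlib

section
/- Let (T,F) be a graph-labelled tree of a connected graph G, let l be a leaf of T, and let e = uv and e' = uv' be distinct tree-edges incident to a node u that is l-accessible, with e on the u,l-path in T. Then ρ_u(e) and ρ_u(e') are adjacent in G_u if and only if there exists an l-accessible leaf l' in the subtree of T − e' containing v'. -/
/-!
Write `C` for the component of `T - uv'` containing `v'`. Since `T` is a tree, the path from
`l` to any vertex of `C` is the admissible `l,u`-path followed by the edge `uv'` and a path
inside `C`; so an `l`-accessible vertex of `C` exists only if the markers of `uv` and `uv'` are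
adjacent at `u`. Conversely, `C` contains a leaf (the end of a longest path starting with
`u → v'`) and `l` does not, so connectivity of the accessibility graph yields an accessible
pair of leaves `x ∉ C`, `y ∈ C`. The admissible `x,y`-path crosses `uv'` from `u`, and gluing
its part from `u` on to the `l,u`-path, using the marker adjacency at `u`, shows that `y` is
`l`-accessible.
-/

open SimpleGraph

variable {V : Type}

/-- A vertex of a tree is a leaf if it has exactly one neighbour. -/
def IsLeaf (T : SimpleGraph V) (v : V) : Prop := ∃! w, T.Adj v w

/-- Admissibility of a walk in a graph-labelled tree: at every internal vertex of the
walk, the marker vertices corresponding to the two consecutive tree-edges are adjacent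
in the label graph. -/
inductive Admissible (T : SimpleGraph V) (F : ∀ v : V, SimpleGraph (T.neighborSet v)) :
    ∀ {a b : V}, T.Walk a b → Prop
  | nil {a : V} : Admissible T F (SimpleGraph.Walk.nil : T.Walk a a)
  | single {a b : V} (h : T.Adj a b) :
      Admissible T F (SimpleGraph.Walk.cons h SimpleGraph.Walk.nil)
  | cons {a v b c : V} (h1 : T.Adj a v) (h2 : T.Adj v b) (p : T.Walk b c)
      (hadj : (F v).Adj ⟨a, h1.symm⟩ ⟨b, h2⟩)
      (hp : Admissible T F (SimpleGraph.Walk.cons h2 p)) :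
      Admissible T F (SimpleGraph.Walk.cons h1 (SimpleGraph.Walk.cons h2 p))

/-- `b` is accessible from `a`: the (unique) path joining them is admissible. -/
def Accessible (T : SimpleGraph V) (F : ∀ v : V, SimpleGraph (T.neighborSet v))
    (a b : V) : Prop :=
  ∃ p : T.Walk a b, p.IsPath ∧ Admissible T F p

/-- The accessibility graph of a graph-labelled tree: vertices are the leaves of the
tree, two leaves being adjacent iff one is accessible from the other. -/
def accGraph (T : SimpleGraph V) (F : ∀ v : V, SimpleGraph (T.neighborSet v)) :
    SimpleGraph {v : V // IsLeaf T v} :=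
  SimpleGraph.fromRel (fun x y => Accessible T F ↑x ↑y)

variable {T : SimpleGraph V} {F : ∀ v : V, SimpleGraph (T.neighborSet v)}

namespace Admissible

lemma tail {a b c : V} {h : T.Adj a b} {p : T.Walk b c}
    (hp : Admissible T F (.cons h p)) : Admissible T F p := by
  cases hp with
  | single => exact .nil
  | cons _ _ _ _ hp => exact hp

lemma cons_cons_iff {a v b c : V} (h₁ : T.Adj a v) (h₂ : T.Adj v b) (p : T.Walk b c) :
    Admissible T F (.cons h₁ (.cons h₂ p)) ↔
      (F v).Adj ⟨a, h₁.symm⟩ ⟨b, h₂⟩ ∧ Admissible T F (.cons h₂ p) := by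
  refine ⟨fun h => ?_, fun h => .cons _ _ _ h.1 h.2⟩
  cases h with
  | cons _ _ _ hadj hp => exact ⟨hadj, hp⟩

lemma concat_append_cons_iff {a v u v' b : V} (q : T.Walk a v) (hv : T.Adj v u)
    (hv' : T.Adj u v') (r : T.Walk v' b) :
    Admissible T F ((q.concat hv).append (.cons hv' r)) ↔
      Admissible T F (q.concat hv) ∧ (F u).Adj ⟨v, hv.symm⟩ ⟨v', hv'⟩ ∧
        Admissible T F (.cons hv' r) := by
  induction q with
  | nil =>
    simp only [Walk.concat_nil, Walk.cons_append, Walk.nil_append, cons_cons_iff]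
    have := Admissible.single (F := F) hv
    tauto
  | cons h q ih =>
    cases q with
    | nil =>
      simp only [Walk.concat_cons, Walk.concat_nil, Walk.cons_append, Walk.nil_append,
        cons_cons_iff]
      have := Admissible.single (F := F) hv
      tauto
    | cons h' q =>
      simp only [Walk.concat_cons, Walk.cons_append] at ih ⊢
      rw [cons_cons_iff, cons_cons_iff, ih]
      tauto

lemma reverse {a b : V} {p : T.Walk a b} (hp : Admissible T F p) :
    Admissible T F p.reverse := by
  induction hp with
  | nil => exact .nil
  | single h => exact .single h.symm
  | cons h₁ h₂ p hadj _ ih =>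
    rw [Walk.reverse_cons, ← Walk.concat_eq_append] at ih
    rw [Walk.reverse_cons, Walk.reverse_cons, ← Walk.concat_eq_append]
    exact (concat_append_cons_iff _ _ _ _).mpr ⟨ih, hadj.symm, .single h₁.symm⟩

lemma exists_cons_suffix {u v' : V} (hv' : T.Adj u v') {a b : V} {P : T.Walk a b}
    (hP : P.IsPath) (hadm : Admissible T F P)
    (ha : ¬ (T.deleteEdges {s(u, v')}).Reachable v' a)
    (hb : (T.deleteEdges {s(u, v')}).Reachable v' b) :
    ∃ r : T.Walk v' b, (Walk.cons hv' r).IsPath ∧ Admissible T F (.cons hv' r) := by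
  induction P with
  | nil => exact absurd hb ha
  | @cons x y b hxy P ih =>
    by_cases hy : (T.deleteEdges {s(u, v')}).Reachable v' y
    · have hedge : s(x, y) = s(u, v') := by
        by_contra hne
        exact ha (hy.trans (deleteEdges_adj.mpr ⟨hxy, hne⟩).reachable.symm)
      rcases Sym2.eq_iff.mp hedge with ⟨rfl, rfl⟩ | ⟨rfl, -⟩
      · exact ⟨P, hP, hadm⟩
      · exact absurd .rfl ha
    · exact ih hP.of_cons hadm.tail hy hb

end Admissible

lemma Accessible.symm {a b : V} (h : Accessible T F a b) : Accessible T F b a :=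
  let ⟨p, hp, hadm⟩ := h
  ⟨p.reverse, hp.reverse, hadm.reverse⟩

lemma reachable_deleteEdges_of_notMem_support {x y a b : V} (p : T.Walk a b)
    (hx : x ∉ p.support) : (T.deleteEdges {s(x, y)}).Reachable a b :=
  reachable_deleteEdges_iff_exists_walk.mpr
    ⟨p, fun he => hx (p.fst_mem_support_of_mem_edges he)⟩

namespace SimpleGraph.IsAcyclic

variable {u v' : V}

lemma not_reachable_deleteEdges (hT : T.IsAcyclic) (hv' : T.Adj u v') :
    ¬ (T.deleteEdges {s(u, v')}).Reachable u v' :=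
  isBridge_iff.mp (isAcyclic_iff_forall_adj_isBridge.mp hT hv')

lemma reachable_deleteEdges_iff (hT : T.IsAcyclic) (hv' : T.Adj u v') {b : V} :
    (T.deleteEdges {s(u, v')}).Reachable v' b ↔
      ∃ r : T.Walk v' b, r.IsPath ∧ u ∉ r.support := by
  classical
  refine ⟨fun hb => ?_, fun ⟨r, _, hu⟩ => reachable_deleteEdges_of_notMem_support r hu⟩
  obtain ⟨p, hp⟩ := reachable_deleteEdges_iff_exists_walk.mp hb
  refine ⟨p.bypass, p.bypass_isPath, fun hu => hT.not_reachable_deleteEdges hv' ?_⟩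
  refine (reachable_deleteEdges_iff_exists_walk.mpr
    ⟨p.bypass.takeUntil u hu, fun he => hp ?_⟩).symm
  exact p.edges_bypass_subset_edges (p.bypass.edges_takeUntil_subset_edges hu he)

lemma isPath_append_cons (hT : T.IsAcyclic) (hv' : T.Adj u v') {a b : V} {p : T.Walk a u}
    (hp : p.IsPath) (hv'p : v' ∉ p.support) {r : T.Walk v' b} (hr : r.IsPath)
    (hur : u ∉ r.support) :
    (p.append (.cons hv' r)).IsPath := by
  classical
  rw [Walk.isPath_def, Walk.support_append, Walk.support_cons, List.tail_cons,
    List.nodup_append]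
  refine ⟨hp.support_nodup, hr.support_nodup, fun z hzp z' hzr hzz' => ?_⟩
  subst hzz'
  have hzu : (T.deleteEdges {s(u, v')}).Reachable z u := by
    rw [Sym2.eq_swap]
    exact reachable_deleteEdges_of_notMem_support (p.dropUntil z hzp)
      fun h => hv'p (p.support_dropUntil_subset_support hzp h)
  have hv'z : (T.deleteEdges {s(u, v')}).Reachable v' z :=
    reachable_deleteEdges_of_notMem_support (r.takeUntil z hzr)
      fun h => hur (r.support_takeUntil_subset_support hzr h)
  exact hT.not_reachable_deleteEdges hv' (hv'z.trans hzu).symm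

/-- The far end of a longest path starting with the edge `u → v'` is a leaf. -/
lemma exists_isLeaf_reachable_deleteEdges [Finite V] (hT : T.IsAcyclic)
    (hv' : T.Adj u v') :
    ∃ m, IsLeaf T m ∧ (T.deleteEdges {s(u, v')}).Reachable v' m := by
  have := Fintype.ofFinite V
  let lengths := {n | ∃ (b : V) (r : T.Walk v' b), (Walk.cons hv' r).IsPath ∧ r.length = n}
  have hfin : lengths.Finite := (Set.finite_lt_nat (Fintype.card V)).subset
    fun n ⟨_, r, hr, hn⟩ => hn ▸ (Nat.lt_succ_self _).trans hr.length_lt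
  obtain ⟨_, ⟨b, r, hr, rfl⟩, hmax⟩ :=
    hfin.exists_maximal ⟨0, v', .nil, .of_adj hv', rfl⟩
  have hnil : ¬ (Walk.cons hv' r).Nil := Walk.not_nil_cons
  have hur : u ∉ r.support := ((Walk.cons_isPath_iff _ _).mp hr).2
  refine ⟨b, ⟨_, (Walk.adj_penultimate hnil).symm, fun w hw => ?_⟩,
    (hT.reachable_deleteEdges_iff hv').mpr ⟨r, hr.of_cons, hur⟩⟩
  refine hT.eq_penultimate_of_adj_end hr hw (by_contra fun hwr => ?_)
  have hlonger : r.length + 1 ∈ lengths :=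
    ⟨w, r.concat hw, by simpa [Walk.concat_cons] using hr.concat hwr hw, Walk.length_concat _ _⟩
  exact absurd (hmax hlonger (Nat.le_succ _)) (by omega)

end SimpleGraph.IsAcyclic

/-- let `l` be a leaf, `u` an `l`-accessible node reached from `l`
through the edge `vu`, and `uv'` another tree-edge at `u`.  Then the markers of
`uv` and `uv'` are adjacent in the label of `u` iff the subtree of `T - uv'`
containing `v'` contains an `l`-accessible leaf. -/
theorem stmt2 [Fintype V] (T : SimpleGraph V) (hT : T.IsTree)
    (F : ∀ v : V, SimpleGraph (T.neighborSet v))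
    (hconn : (accGraph T F).Connected)
    (l u v v' : V) (hl : IsLeaf T l)
    (hv : T.Adj v u) (hv' : T.Adj u v') (hne : v' ≠ v)
    (q : T.Walk l v) (hq : (q.concat hv).IsPath)
    (hadm : Admissible T F (q.concat hv)) :
    (F u).Adj ⟨v, hv.symm⟩ ⟨v', hv'⟩ ↔
      ∃ l' : V, IsLeaf T l' ∧ Accessible T F l l' ∧
        (T.deleteEdges {s(u, v')}).Reachable v' l' := by
  have hacyc := hT.isAcyclic
  have hv'q : v' ∉ (q.concat hv).support := fun h =>
    hne (by simpa using hacyc.eq_penultimate_of_adj_end hq hv' h)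
  have hl_side : ¬ (T.deleteEdges {s(u, v')}).Reachable v' l := by
    have : (T.deleteEdges {s(u, v')}).Reachable l u := by
      rw [Sym2.eq_swap]; exact reachable_deleteEdges_of_notMem_support _ hv'q
    exact fun h => hacyc.not_reachable_deleteEdges hv' (h.trans this).symm
  constructor
  · intro hadj
    obtain ⟨m, hm, hm_side⟩ := hacyc.exists_isLeaf_reachable_deleteEdges hv'
    obtain ⟨⟨⟨x, y⟩, hxy⟩, -, hx, hy⟩ :=
      (hconn.preconnected ⟨l, hl⟩ ⟨m, hm⟩).some.exists_boundary_dart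
        {z | ¬ (T.deleteEdges {s(u, v')}).Reachable v' z} hl_side (not_not.mpr hm_side)
    obtain ⟨P, hP, hPadm⟩ : Accessible T F x y := (fromRel_adj _ _ _ |>.mp hxy).2.elim id .symm
    obtain ⟨r, hr, hradm⟩ := hPadm.exists_cons_suffix hv' hP hx (not_not.mp hy)
    have hur : u ∉ r.support := ((Walk.cons_isPath_iff _ _).mp hr).2
    exact ⟨y, y.2, ⟨_, hacyc.isPath_append_cons hv' hq hv'q hr.of_cons hur,
      (Admissible.concat_append_cons_iff q hv hv' r).mpr ⟨hadm, hadj, hradm⟩⟩,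
      (hacyc.reachable_deleteEdges_iff hv').mpr ⟨r, hr.of_cons, hur⟩⟩
  · rintro ⟨l', -, ⟨R, hR, hRadm⟩, hl'⟩
    obtain ⟨r, hr, hur⟩ := (hacyc.reachable_deleteEdges_iff hv').mp hl'
    have hpath := hacyc.isPath_append_cons hv' hq hv'q hr hur
    obtain rfl : R = _ :=
      congrArg Subtype.val ((hacyc.subsingleton_path l l').elim ⟨R, hR⟩ ⟨_, hpath⟩)
    exact ((Admissible.concat_append_cons_iff q hv hv' r).mp hRadm).2.1
end

section
/- Every graph obtained from a distance-hereditary graph G by adding a pendant vertex (a new vertex adjacent to exactly one vertex of G), a true twin of an existing vertex, or a false twin of an existing vertex, is distance hereditary. -/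
open SimpleGraph

def IsDistHereditary {V : Type} (G : SimpleGraph V) : Prop :=
  ∀ s : Set V, (SimpleGraph.induce s G).Connected →
    ∀ x y : s, (SimpleGraph.induce s G).dist x y = G.dist ↑x ↑y

/-!
Let `w` be the new vertex and `z` the vertex it hangs from or is a twin of. Collapsing `w` onto
`z` is a weak homomorphism (edges go to edges or to single vertices), so every connected induced
subgraph avoiding `w` is isometric in the extension, as it was in the old graph. Distances from
`w` are read off those from `z`, in the induced subgraph and in the whole graph alike: a pendant
vertex is one step farther from everything, a twin is exactly as far from every third vertex.
An induced subgraph containing a twin `w` but not `z` is carried onto one avoiding `w` by the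
automorphism swapping `w` and `z`.
-/

namespace SimpleGraph

section WeakHom

variable {U W : Type*} {A : SimpleGraph U} {B : SimpleGraph W} {f : U → W}

def IsWeakHom (A : SimpleGraph U) (B : SimpleGraph W) (f : U → W) : Prop :=
  ∀ ⦃u v⦄, A.Adj u v → f u = f v ∨ B.Adj (f u) (f v)

lemma Hom.isWeakHom (φ : A →g B) : IsWeakHom A B φ := fun _ _ h => .inr (φ.map_adj h)

lemma IsWeakHom.exists_walk_length_le (hf : IsWeakHom A B f) {u v : U} (p : A.Walk u v) :
    ∃ q : B.Walk (f u) (f v), q.length ≤ p.length := by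
  induction p with
  | nil => exact ⟨.nil, le_rfl⟩
  | cons h _ ih =>
    obtain ⟨q, hq⟩ := ih
    rcases hf h with heq | hadj
    · exact ⟨q.copy heq.symm rfl, by simp only [Walk.length_copy, Walk.length_cons]; omega⟩
    · exact ⟨.cons hadj q, by simp only [Walk.length_cons]; omega⟩

lemma IsWeakHom.reachable (hf : IsWeakHom A B f) {u v : U} (h : A.Reachable u v) :
    B.Reachable (f u) (f v) :=
  h.elim fun p => ⟨(hf.exists_walk_length_le p).choose⟩

lemma IsWeakHom.dist_le (hf : IsWeakHom A B f) {u v : U} (h : A.Reachable u v) :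
    B.dist (f u) (f v) ≤ A.dist u v := by
  obtain ⟨p, hp⟩ := h.exists_walk_length_eq_dist
  obtain ⟨q, hq⟩ := hf.exists_walk_length_le p
  exact (SimpleGraph.dist_le q).trans (hp ▸ hq)

lemma IsWeakHom.connected (hf : IsWeakHom A B f) (hsurj : Function.Surjective f)
    (hA : A.Connected) : B.Connected := by
  have : Nonempty U := hA.nonempty
  have : Nonempty W := ⟨f (Classical.arbitrary U)⟩
  refine ⟨fun a b => ?_⟩
  obtain ⟨u, rfl⟩ := hsurj a
  obtain ⟨v, rfl⟩ := hsurj b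
  exact hf.reachable (hA u v)

lemma dist_le_dist_induce {s : Set U} (hs : (A.induce s).Connected) (u v : s) :
    A.dist u v ≤ (A.induce s).dist u v :=
  (Embedding.induce s).toHom.isWeakHom.dist_le (hs u v)

lemma reachable_of_connected_induce {s : Set U} (hs : (A.induce s).Connected) (u v : s) :
    A.Reachable u v :=
  (hs u v).map (Embedding.induce s).toHom

lemma isWeakHom_update_id [DecidableEq U] {w z : U}
    (hdom : A.neighborSet w ⊆ insert z (A.neighborSet z)) :
    IsWeakHom A A (Function.update id w z) := by
  intro u v huv
  have hw : ∀ {y}, A.Adj w y → y = z ∨ A.Adj z y := fun h => hdom h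
  by_cases hu : u = w <;> by_cases hv : v = w
  · exact absurd (hu ▸ hv ▸ huv) A.irrefl
  · subst hu
    simp only [Function.update_self, Function.update_of_ne hv, id]
    exact (hw huv).imp Eq.symm id
  · subst hv
    simp only [Function.update_self, Function.update_of_ne hu, id]
    exact (hw huv.symm).imp id Adj.symm
  · simp only [Function.update_of_ne hu, Function.update_of_ne hv, id]
    exact .inr huv

end WeakHom

section Twins

variable {U : Type*} {A : SimpleGraph U} {w z v : U}

-- Adjacency between `w` and `z` is left free: this covers true and false twins alike.
def AreTwins (A : SimpleGraph U) (w z : U) : Prop :=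
  ∀ ⦃y⦄, y ≠ w → y ≠ z → (A.Adj w y ↔ A.Adj z y)

lemma AreTwins.symm (h : A.AreTwins w z) : A.AreTwins z w :=
  fun _ hz hw => (h hw hz).symm

lemma AreTwins.induce {s : Set U} (h : A.AreTwins w z) (hw : w ∈ s) (hz : z ∈ s) :
    (A.induce s).AreTwins ⟨w, hw⟩ ⟨z, hz⟩ :=
  fun _ hyw hyz => h (Subtype.coe_ne_coe.mpr hyw) (Subtype.coe_ne_coe.mpr hyz)

lemma AreTwins.neighborSet_subset (h : A.AreTwins w z) :
    A.neighborSet w ⊆ insert z (A.neighborSet z) := by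
  intro y hy
  by_cases hyz : y = z
  · exact .inl hyz
  · exact .inr ((h (A.ne_of_adj hy).symm hyz).mp hy)

lemma AreTwins.adj_swap [DecidableEq U] (h : A.AreTwins w z) {u v : U} (huv : A.Adj u v) :
    A.Adj (Equiv.swap w z u) (Equiv.swap w z v) := by
  simp only [Equiv.swap_apply_def]
  split_ifs <;> subst_vars <;> grind [AreTwins, Adj.symm, SimpleGraph.irrefl]

lemma AreTwins.dist_le_dist (h : A.AreTwins w z) (hvw : v ≠ w) (hr : A.Reachable w v) :
    A.dist z v ≤ A.dist w v := by
  obtain ⟨p, hp⟩ := hr.exists_walk_length_eq_dist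
  obtain ⟨y, hwy, q, rfl⟩ := Walk.exists_eq_cons_of_ne hvw.symm p
  rw [← hp, Walk.length_cons]
  by_cases hyz : y = z
  · subst hyz
    exact (dist_le q).trans (Nat.le_succ _)
  · exact dist_le (.cons ((h (A.ne_of_adj hwy).symm hyz).mp hwy) q)

lemma AreTwins.dist_le_two (h : A.AreTwins w z) (hr : A.Reachable w z) : A.dist w z ≤ 2 := by
  by_cases hadj : A.Adj w z
  · rw [dist_eq_one_iff_adj.mpr hadj]; omega
  rcases eq_or_ne w z with rfl | hwz
  · simp
  obtain ⟨p⟩ := hr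
  obtain ⟨y, hwy, -, -⟩ := Walk.exists_eq_cons_of_ne hwz p
  have hyz : y ≠ z := by rintro rfl; exact hadj hwy
  exact dist_le (.cons hwy (.cons ((h (A.ne_of_adj hwy).symm hyz).mp hwy).symm .nil))

end Twins

lemma dist_add_one_le_of_neighborSet_eq_singleton {U : Type*} {A : SimpleGraph U} {w z v : U}
    (hw : A.neighborSet w = {z}) (hvw : v ≠ w) (hr : A.Reachable w v) :
    A.dist z v + 1 ≤ A.dist w v := by
  obtain ⟨p, hp⟩ := hr.exists_walk_length_eq_dist
  obtain ⟨y, hwy, q, rfl⟩ := Walk.exists_eq_cons_of_ne hvw.symm p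
  have hyz : y = z := by rw [← Set.mem_singleton_iff, ← hw]; exact hwy
  subst hyz
  rw [← hp, Walk.length_cons]
  exact Nat.succ_le_succ (dist_le q)

end SimpleGraph

def IsDistHereditaryOn {V : Type} (G : SimpleGraph V) (S : Set V) : Prop :=
  ∀ s ⊆ S, (G.induce s).Connected → ∀ x y : s, (G.induce s).dist x y = G.dist x y

namespace IsDistHereditaryOn

variable {U W : Type} {A : SimpleGraph U} {B : SimpleGraph W} {T : Set W} {s : Set U}

lemma dist_induce_le_of_retract (hB : IsDistHereditaryOn B T) (ι : B →g A) {r : U → W}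
    (hr : IsWeakHom A B r) (hs : (A.induce s).Connected) (hrs : r '' s ⊆ T)
    (hιs : ∀ u ∈ s, ι (r u) ∈ s) {u v : s} (hu : ι (r u) = u) (hv : ι (r v) = v) :
    (A.induce s).dist u v ≤ A.dist u v := by
  let ρ : s → r '' s := Set.MapsTo.restrict r s _ (Set.mapsTo_image r s)
  have hρ : IsWeakHom (A.induce s) (B.induce (r '' s)) ρ :=
    fun _ _ h => (hr h).imp Subtype.ext id
  have ht : (B.induce (r '' s)).Connected :=
    hρ.connected (by rintro ⟨_, u, hu, rfl⟩; exact ⟨⟨u, hu⟩, rfl⟩) hs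
  let κ : B.induce (r '' s) →g A.induce s :=
    induceHom ι (by rintro _ ⟨u, hu, rfl⟩; exact hιs u hu)
  calc (A.induce s).dist u v = (A.induce s).dist (κ (ρ u)) (κ (ρ v)) := by
        rw [show κ (ρ u) = u from Subtype.ext hu, show κ (ρ v) = v from Subtype.ext hv]
    _ ≤ (B.induce (r '' s)).dist (ρ u) (ρ v) := κ.isWeakHom.dist_le (ht _ _)
    _ = B.dist (r u) (r v) := hB _ hrs ht _ _
    _ ≤ A.dist u v := hr.dist_le (reachable_of_connected_induce hs u v)

variable {w z : U}

lemma dist_induce_le_of_ne (hA : IsDistHereditaryOn A {w}ᶜ) (hwz : w ≠ z)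
    (hdom : A.neighborSet w ⊆ insert z (A.neighborSet z)) (hs : (A.induce s).Connected)
    (hzs : z ∈ s) {u v : s} (hu : (u : U) ≠ w) (hv : (v : U) ≠ w) :
    (A.induce s).dist u v ≤ A.dist u v := by
  classical
  refine hA.dist_induce_le_of_retract Hom.id (isWeakHom_update_id hdom) hs ?_ ?_
    (Function.update_of_ne hu _ _) (Function.update_of_ne hv _ _)
  · rintro _ ⟨y, -, rfl⟩
    by_cases hy : y = w
    · simpa [hy] using hwz.symm
    · simpa [Function.update_of_ne hy] using hy
  · intro y hy
    by_cases hyw : y = w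
    · simpa [hyw] using hzs
    · simpa [Function.update_of_ne hyw] using hy

lemma dist_induce_le_of_mem (hA : IsDistHereditaryOn A {w}ᶜ) (hwz : w ≠ z)
    (hdom : A.neighborSet w ⊆ insert z (A.neighborSet z)) (hs : (A.induce s).Connected)
    (hws : w ∈ s) (hzs : z ∈ s)
    (hw : ∀ v : s, (v : U) ≠ w → (A.induce s).dist ⟨w, hws⟩ v ≤ A.dist w v) (u v : s) :
    (A.induce s).dist u v ≤ A.dist u v := by
  by_cases hu : (u : U) = w <;> by_cases hv : (v : U) = w
  · simp [Subtype.ext (hu.trans hv.symm)]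
  · obtain rfl : u = ⟨w, hws⟩ := Subtype.ext hu
    exact hw v hv
  · obtain rfl : v = ⟨w, hws⟩ := Subtype.ext hv
    rw [dist_comm, A.dist_comm]
    exact hw u hu
  · exact hA.dist_induce_le_of_ne hwz hdom hs hzs hu hv

lemma compl_singleton_of_areTwins (hA : IsDistHereditaryOn A {w}ᶜ) (h : A.AreTwins w z) :
    IsDistHereditaryOn A {z}ᶜ := by
  classical
  let σ : A →g A := ⟨Equiv.swap w z, h.adj_swap⟩
  intro s hsz hs u v
  refine le_antisymm (hA.dist_induce_le_of_retract σ σ.isWeakHom hs ?_ ?_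
    (Equiv.swap_apply_self _ _ _) (Equiv.swap_apply_self _ _ _)) (dist_le_dist_induce hs u v)
  · rintro _ ⟨y, hy, rfl⟩ hyw
    exact hsz hy (by simpa [σ, Equiv.swap_apply_eq_iff] using hyw)
  · intro y hy
    simpa [σ] using hy

theorem isDistHereditary_of_neighborSet_eq_singleton (hA : IsDistHereditaryOn A {w}ᶜ)
    (hw : A.neighborSet w = {z}) : IsDistHereditary A := by
  have hadj : A.Adj w z := by rw [← mem_neighborSet, hw]; rfl
  have hdom : A.neighborSet w ⊆ insert z (A.neighborSet z) := by simp [hw]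
  intro s hs u v
  refine le_antisymm ?_ (dist_le_dist_induce hs u v)
  by_cases hws : w ∈ s
  swap
  · exact (hA s (Set.subset_compl_singleton_iff.mpr hws) hs u v).le
  let w' : s := ⟨w, hws⟩
  by_cases hzs : z ∈ s
  swap
  · -- `w` has no neighbour in `s`, so `s = {w}`
    have hiso : ∀ y : s, y = w' := by
      intro y
      by_contra hy
      obtain ⟨p⟩ := hs w' y
      obtain ⟨y', hy', -, -⟩ := Walk.exists_eq_cons_of_ne (Ne.symm hy) p
      have : (y' : U) = z := by rw [← Set.mem_singleton_iff, ← hw]; exact hy'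
      exact hzs (this ▸ y'.2)
    simp [hiso u, hiso v]
  let z' : s := ⟨z, hzs⟩
  have hadj' : (A.induce s).Adj w' z' := hadj
  refine hA.dist_induce_le_of_mem hadj.ne hdom hs hws hzs (fun v hv => ?_) u v
  calc (A.induce s).dist w' v ≤ (A.induce s).dist w' z' + (A.induce s).dist z' v :=
        hs.dist_triangle
    _ = (A.induce s).dist z' v + 1 := by rw [dist_eq_one_iff_adj.mpr hadj', add_comm]
    _ ≤ A.dist z v + 1 := by
      gcongr; exact hA.dist_induce_le_of_ne hadj.ne hdom hs hzs hadj.ne.symm hv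
    _ ≤ A.dist w v := dist_add_one_le_of_neighborSet_eq_singleton hw hv
      (reachable_of_connected_induce hs w' v)

theorem isDistHereditary_of_areTwins (hA : IsDistHereditaryOn A {w}ᶜ) (hwz : w ≠ z)
    (h : A.AreTwins w z) : IsDistHereditary A := by
  intro s hs u v
  refine le_antisymm ?_ (dist_le_dist_induce hs u v)
  by_cases hws : w ∈ s
  swap
  · exact (hA s (Set.subset_compl_singleton_iff.mpr hws) hs u v).le
  by_cases hzs : z ∈ s
  swap
  · exact (hA.compl_singleton_of_areTwins h s (Set.subset_compl_singleton_iff.mpr hzs)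
      hs u v).le
  let w' : s := ⟨w, hws⟩
  let z' : s := ⟨z, hzs⟩
  have hs' := h.induce hws hzs
  refine hA.dist_induce_le_of_mem hwz h.neighborSet_subset hs hws hzs (fun v hv => ?_) u v
  by_cases hvz : (v : U) = z
  · obtain rfl : v = z' := Subtype.ext hvz
    have hr := reachable_of_connected_induce hs w' z'
    by_cases hadj : A.Adj w z
    · have hadj' : (A.induce s).Adj w' z' := hadj
      rw [dist_eq_one_iff_adj.mpr hadj, dist_eq_one_iff_adj.mpr hadj']
    · calc (A.induce s).dist w' z' ≤ 2 := hs'.dist_le_two (hs _ _)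
        _ ≤ A.dist w z := hr.one_lt_dist_of_ne_of_not_adj hwz hadj
  · calc (A.induce s).dist w' v ≤ (A.induce s).dist z' v :=
          hs'.symm.dist_le_dist (Subtype.coe_ne_coe.mp hvz) (hs _ _)
      _ ≤ A.dist z v := hA.dist_induce_le_of_ne hwz h.neighborSet_subset hs hzs hwz.symm hv
      _ ≤ A.dist w v := h.dist_le_dist hv (reachable_of_connected_induce hs w' v)

end IsDistHereditaryOn

lemma isDistHereditaryOn_compl_none {V : Type} {G : SimpleGraph V} {G' : SimpleGraph (Option V)}
    (hDH : IsDistHereditary G) (hsame : ∀ a b : V, G'.Adj (some a) (some b) ↔ G.Adj a b) {x : V}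
    (hdom : G'.neighborSet none ⊆ insert (some x) (G'.neighborSet (some x))) :
    IsDistHereditaryOn G' {none}ᶜ := by
  let ι : G →g G' := ⟨some, (hsame _ _).mpr⟩
  have hr : IsWeakHom G' G (Option.getD · x) := by
    have hx : ∀ {a}, G'.Adj none (some a) → x = a ∨ G.Adj x a := fun h => by
      rcases hdom h with h | h
      · exact .inl (Option.some_injective _ h).symm
      · exact .inr ((hsame x _).mp h)
    rintro (_ | a) (_ | b) hab
    · exact absurd hab G'.irrefl
    · exact hx hab
    · exact (hx hab.symm).imp Eq.symm Adj.symm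
    · exact .inr ((hsame a b).mp hab)
  intro s hs hconn u v
  have hret : ∀ u ∈ s, some (u.getD x) = u := by
    rintro (_ | a) hu
    exacts [absurd rfl (hs hu), rfl]
  refine le_antisymm (IsDistHereditaryOn.dist_induce_le_of_retract (T := Set.univ)
    (fun t _ => hDH t) ι hr hconn (Set.subset_univ _) (fun u hu => (hret u hu).symm ▸ hu)
    (hret u u.2) (hret v v.2)) (dist_le_dist_induce hconn u v)

theorem stmt17_general (V : Type) (G : SimpleGraph V)
    (hDH : IsDistHereditary G) (G' : SimpleGraph (Option V))
    (hsame : ∀ a b : V, G'.Adj (some a) (some b) ↔ G.Adj a b)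
    (h : (∃ x : V, ∀ a : V, G'.Adj none (some a) ↔ a = x) ∨
         (∃ x : V, ∀ a : V, G'.Adj none (some a) ↔ (G.Adj x a ∨ a = x)) ∨
         (∃ x : V, ∀ a : V, G'.Adj none (some a) ↔ G.Adj x a)) :
    IsDistHereditary G' := by
  have twins {x : V} (hx : ∀ a, a ≠ x → (G'.Adj none (some a) ↔ G.Adj x a)) :
      G'.AreTwins none (some x) := by
    rintro (_ | a) h₁ h₂
    · exact absurd rfl h₁
    · rw [hx a (fun h => h₂ (congrArg some h)), hsame]
  rcases h with ⟨x, hx⟩ | htwins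
  · have hpend : G'.neighborSet none = {some x} := by
      ext (_ | a)
      · simp
      · simp [hx]
    exact IsDistHereditaryOn.isDistHereditary_of_neighborSet_eq_singleton
      (isDistHereditaryOn_compl_none hDH hsame (x := x) (by simp [hpend])) hpend
  · obtain ⟨x, htw⟩ : ∃ x, G'.AreTwins none (some x) := by
      rcases htwins with ⟨x, hx⟩ | ⟨x, hx⟩
      · exact ⟨x, twins fun a ha => (hx a).trans (or_iff_left ha)⟩
      · exact ⟨x, twins fun a _ => hx a⟩
    exact IsDistHereditaryOn.isDistHereditary_of_areTwins
      (isDistHereditaryOn_compl_none hDH hsame htw.neighborSet_subset) (Option.some_ne_none x).symm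
      htw

/-- adding a pendant vertex, a true twin, or a false twin to a
distance-hereditary graph yields a distance-hereditary graph.  The new vertex is
`none : Option V`; `G'` agrees with `G` on `V`. -/
theorem stmt17 (V : Type) [Fintype V] (G : SimpleGraph V)
    (hDH : IsDistHereditary G) (G' : SimpleGraph (Option V))
    (hsame : ∀ a b : V, G'.Adj (some a) (some b) ↔ G.Adj a b)
    (h : (∃ x : V, ∀ a : V, G'.Adj none (some a) ↔ a = x) ∨
         (∃ x : V, ∀ a : V, G'.Adj none (some a) ↔ (G.Adj x a ∨ a = x)) ∨
         (∃ x : V, ∀ a : V, G'.Adj none (some a) ↔ G.Adj x a)) :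
    IsDistHereditary G' :=
  stmt17_general V G hDH G' hsame h
end
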